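/- arXiv:2309.01468 — 5 statements merged into one kernel-verified Lean document; each statement's English description precedes it below -/
import Mathlib

section
/- Let k be a field, X a finite set, V the k-vector space with basis (e_x)_{x∈X}, and H a subgroup of GL(V) containing all invertible diagonal maps (e_x ↦ u_x e_x with all u_x ≠ 0). Define the preorder pre(H) on X by: x pre(H) y iff every subset Y ⊆ X with ⟨Y⟩ invariant under all elements of H and with x ∈ Y also contains y. Then for every preorder ≤ on X: H ⊆ GL_≥(X) if and only if pre(H) ⪯ ≤ (i.e., x pre(H) y implies x ≤ y for all x, y). -/
namespace Module.Basis

variable {R M ι : Type*} [Semiring R] [AddCommMonoid M] [Module R M]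

theorem map_span_image_le_iff (b : Basis ι R M) (f : M →ₗ[R] M) (Y : Set ι) :
    (Submodule.span R (b '' Y)).map f ≤ Submodule.span R (b '' Y) ↔
      ∀ z ∈ Y, ↑(b.repr (f (b z))).support ⊆ Y := by
  rw [Submodule.map_span_le, Set.forall_mem_image]
  simp only [b.mem_span_image]

end Module.Basis

theorem galois_correspondence_subgroups_preorders_general
    {k V X : Type*} [Field k] [AddCommGroup V] [Module k V]
    (b : Module.Basis X k V) (H : Subgroup (V ≃ₗ[k] V))
    (r : X → X → Prop) (hrefl : Reflexive r) (htrans : Transitive r) :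
    ((H : Set (V ≃ₗ[k] V)) ⊆ {g | ∀ x : X,
        (Submodule.span k (b '' {y | r x y})).map (g : V →ₗ[k] V) ≤
          Submodule.span k (b '' {y | r x y})})
      ↔ ∀ x y : X,
          (∀ Y : Set X,
            (∀ g ∈ H, (Submodule.span k (b '' Y)).map (g : V →ₗ[k] V) ≤
                Submodule.span k (b '' Y)) →
            x ∈ Y → y ∈ Y) →
          r x y := by
  constructor
  · intro hH x y hxy
    exact hxy {y | r x y} (fun g hg => hH hg x) (hrefl x)
  · intro hpre g hg x
    rw [b.map_span_image_le_iff]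
    intro z hxz w hw
    -- every `H`-invariant coordinate subspace containing `e_z` contains `g e_z`, hence `e_w`
    refine htrans hxz (hpre z w fun Y hY hzY => ?_)
    exact (b.map_span_image_le_iff _ Y).1 (hY g hg) z hzY hw

/-- Let `X` be a finite set, `V` a `k`-vector space with basis `(e_x)_{x ∈ X}`, and
`H` a subgroup of `GL(V)` containing all invertible diagonal maps (with respect to
the basis). For the preorder `pre(H)` on `X` defined by: `x pre(H) y` iff every
subset `Y ⊆ X` whose span is `H`-invariant and which contains `x` also contains
`y`, we have, for every preorder `r` on `X`:
`H ⊆ GL_≥(X)` if and only if `pre(H) ⪯ r`. -/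
theorem galois_correspondence_subgroups_preorders
    {k V X : Type*} [Field k] [AddCommGroup V] [Module k V] [Finite X]
    (b : Module.Basis X k V) (H : Subgroup (V ≃ₗ[k] V))
    (hdiag : ∀ u : X → kˣ, ∃ g ∈ H, ∀ x : X, g (b x) = (u x : k) • b x)
    (r : X → X → Prop) (hrefl : Reflexive r) (htrans : Transitive r) :
    ((H : Set (V ≃ₗ[k] V)) ⊆ {g | ∀ x : X,
        (Submodule.span k (b '' {y | r x y})).map (g : V →ₗ[k] V) ≤
          Submodule.span k (b '' {y | r x y})})
      ↔ ∀ x y : X,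
          (∀ Y : Set X,
            (∀ g ∈ H, (Submodule.span k (b '' Y)).map (g : V →ₗ[k] V) ≤
                Submodule.span k (b '' Y)) →
            x ∈ Y → y ∈ Y) →
          r x y :=
  galois_correspondence_subgroups_preorders_general b H r hrefl htrans
end

section
/- Let k be an algebraically closed field of characteristic zero, X a finite set with a preorder ≤, and V the k-vector space with basis (e_x)_{x∈X}. Then pre(GL_≥(X)) equals ≤; that is, for all x, y ∈ X: x ≤ y if and only if every subset Y ⊆ X such that ⟨Y⟩ is invariant under all g ∈ GL_≥(X) and x ∈ Y also satisfies y ∈ Y. -/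
/-!
If `x ≤ y`, the elementary transvection `e_x ↦ e_x + e_y` maps every principal up-set span
`⟨U_z⟩` into itself (if `x ∈ U_z` then `y ∈ U_z`), and a coordinate span `⟨Y⟩` it preserves with
`x ∈ Y` must contain `e_y`, hence `y ∈ Y`. Conversely `⟨U_x⟩` is itself `GL_≥(X)`-invariant.
-/

open Module Submodule

namespace Module.Basis

variable {k V X : Type*} [Ring k] [AddCommGroup V] [Module k V] (b : Basis X k V)

noncomputable def elemTransvection {x y : X} (hxy : x ≠ y) : V ≃ₗ[k] V :=
  LinearEquiv.transvection (f := b.coord x) (v := b y) (by simp [hxy])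

variable {b} {x y : X}

theorem elemTransvection_apply_self (hxy : x ≠ y) :
    b.elemTransvection hxy (b x) = b x + b y := by
  simp [elemTransvection, LinearMap.transvection.apply]

theorem elemTransvection_apply_of_ne (hxy : x ≠ y) {w : X} (hw : w ≠ x) :
    b.elemTransvection hxy (b w) = b w := by
  simp [elemTransvection, LinearMap.transvection.apply, hw]

theorem map_span_elemTransvection_le (hxy : x ≠ y) {S : Set X} (hS : x ∈ S → y ∈ S) :
    (span k (b '' S)).map (b.elemTransvection hxy : V →ₗ[k] V) ≤ span k (b '' S) := by
  rw [map_span, span_le]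
  rintro _ ⟨_, ⟨w, hw, rfl⟩, rfl⟩
  obtain rfl | hwx := eq_or_ne w x
  · rw [LinearEquiv.coe_coe, elemTransvection_apply_self]
    exact add_mem (subset_span ⟨w, hw, rfl⟩) (subset_span ⟨y, hS hw, rfl⟩)
  · rw [LinearEquiv.coe_coe, elemTransvection_apply_of_ne hxy hwx]
    exact subset_span ⟨w, hw, rfl⟩

theorem mem_of_map_span_elemTransvection_le [Nontrivial k] (hxy : x ≠ y) {Y : Set X}
    (hY : (span k (b '' Y)).map (b.elemTransvection hxy : V →ₗ[k] V) ≤ span k (b '' Y))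
    (hx : x ∈ Y) : y ∈ Y := by
  have hbx : b x ∈ span k (b '' Y) := subset_span ⟨x, hx, rfl⟩
  have hsum : b x + b y ∈ span k (b '' Y) := by
    rw [← elemTransvection_apply_self hxy]
    exact hY (mem_map_of_mem hbx)
  rw [← b.self_mem_span_image, ← add_sub_cancel_left (b x) (b y)]
  exact sub_mem hsum hbx

end Module.Basis

theorem pre_of_GL_of_preorder_general
    {k V X : Type*} [Field k]
    [AddCommGroup V] [Module k V] [Preorder X] (b : Module.Basis X k V) :
    ∀ x y : X, x ≤ y ↔
      ∀ Y : Set X,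
        (∀ g : V ≃ₗ[k] V,
          (∀ z : X, (Submodule.span k (b '' {w | z ≤ w})).map (g : V →ₗ[k] V) ≤
              Submodule.span k (b '' {w | z ≤ w})) →
          (Submodule.span k (b '' Y)).map (g : V →ₗ[k] V) ≤
            Submodule.span k (b '' Y)) →
        x ∈ Y → y ∈ Y := by
  intro x y
  refine ⟨fun hxy Y hY hx => ?_, fun h => h {w | x ≤ w} (fun g hg => hg x) le_rfl⟩
  obtain rfl | hne := eq_or_ne x y
  · exact hx
  have hup : ∀ z : X, (span k (b '' {w | z ≤ w})).map (b.elemTransvection hne : V →ₗ[k] V) ≤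
      span k (b '' {w | z ≤ w}) :=
    fun z => Basis.map_span_elemTransvection_le hne fun hzx => le_trans hzx hxy
  exact Basis.mem_of_map_span_elemTransvection_le hne (hY _ hup) hx

/-- Let `k` be an algebraically closed field of characteristic zero, `X` a finite
preordered set, and `V` a `k`-vector space with basis `(e_x)_{x ∈ X}`. Then
`pre(GL_≥(X))` equals the original preorder: `x ≤ y` iff every subset `Y ⊆ X`
whose span is invariant under all `g ∈ GL_≥(X)` and which contains `x` also
contains `y`. -/
theorem pre_of_GL_of_preorder
    {k V X : Type*} [Field k] [IsAlgClosed k] [CharZero k]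
    [AddCommGroup V] [Module k V] [Finite X] [Preorder X] (b : Module.Basis X k V) :
    ∀ x y : X, x ≤ y ↔
      ∀ Y : Set X,
        (∀ g : V ≃ₗ[k] V,
          (∀ z : X, (Submodule.span k (b '' {w | z ≤ w})).map (g : V →ₗ[k] V) ≤
              Submodule.span k (b '' {w | z ≤ w})) →
          (Submodule.span k (b '' Y)).map (g : V →ₗ[k] V) ≤
            Submodule.span k (b '' Y)) →
        x ∈ Y → y ∈ Y :=
  pre_of_GL_of_preorder_general b
end

section
/- Let k be a field and I a monomial ideal in k[x₁,…,xₙ]. For a monotone (order-preserving) map u : {1 < 2 < ⋯ < n} → ℕ, let m(u) denote the monomial x₁^{u₁} x₂^{u₂−u₁} ⋯ xₙ^{uₙ−u_{n−1}}. Then I is strongly stable if and only if the set { u ∈ Hom([n],ℕ) : m(u) ∈ I } is an upper set for the pointwise order on monotone maps (i.e., if m(u) ∈ I and u(i) ≤ v(i) for all i with v monotone, then m(v) ∈ I). -/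
open MvPolynomial

/-- For a monotone map `u : [n] → ℕ`, the exponent vector of the monomial
`x₁^{u₁} x₂^{u₂ - u₁} ⋯ xₙ^{uₙ - u_{n-1}}` (indices shifted so `x_i` is the
variable of index `i : Fin n`). -/
noncomputable def expOf {n : ℕ} (u : Fin n → ℕ) : Fin n →₀ ℕ :=
  Finsupp.equivFunOnFinite.symm fun i =>
    u i - (if h : (i : ℕ) = 0 then 0
           else u ⟨(i : ℕ) - 1, lt_of_le_of_lt (Nat.sub_le _ _) i.isLt⟩)

lemma expOf_apply' {n : ℕ} (u : Fin n → ℕ) (l : Fin n) :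
    expOf u l = u l - (if _ : (l : ℕ) = 0 then 0
           else u ⟨(l : ℕ) - 1, lt_of_le_of_lt (Nat.sub_le _ _) l.isLt⟩) := rfl

noncomputable def psum' {n : ℕ} (m : Fin n →₀ ℕ) (l : Fin n) : ℕ :=
  ∑ t ∈ Finset.univ.filter (fun t : Fin n => (t : ℕ) ≤ (l : ℕ)), m t

lemma psum'_mono {n : ℕ} (m : Fin n →₀ ℕ) : Monotone (psum' m) := by
  intro a b hab
  apply Finset.sum_le_sum_of_subset
  intro t ht
  simp only [Finset.mem_filter, Finset.mem_univ, true_and] at *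
  exact le_trans ht hab

lemma psum'_succ {n : ℕ} (m : Fin n →₀ ℕ) (l : Fin n) (h : (l : ℕ) ≠ 0) :
    psum' m l = psum' m ⟨(l : ℕ) - 1, lt_of_le_of_lt (Nat.sub_le _ _) l.isLt⟩ + m l := by
  unfold psum'
  have hset : Finset.univ.filter (fun t : Fin n => (t : ℕ) ≤ (l : ℕ))
      = insert l (Finset.univ.filter (fun t : Fin n => (t : ℕ) ≤ (l : ℕ) - 1)) := by
    ext t
    simp only [Finset.mem_filter, Finset.mem_univ, true_and, Finset.mem_insert, Fin.ext_iff]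
    omega
  rw [hset, Finset.sum_insert (by simp; omega), add_comm]

lemma psum'_zero {n : ℕ} (m : Fin n →₀ ℕ) (l : Fin n) (h : (l : ℕ) = 0) :
    psum' m l = m l := by
  unfold psum'
  have : Finset.univ.filter (fun t : Fin n => (t : ℕ) ≤ (l : ℕ)) = {l} := by
    ext t
    simp only [Finset.mem_filter, Finset.mem_univ, true_and, Finset.mem_singleton, Fin.ext_iff]
    omega
  rw [this, Finset.sum_singleton]

lemma expOf_psum' {n : ℕ} (m : Fin n →₀ ℕ) : expOf (psum' m) = m := by
  ext l
  rw [expOf_apply']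
  by_cases h0 : (l : ℕ) = 0
  · rw [dif_pos h0, Nat.sub_zero, psum'_zero m l h0]
  · rw [dif_neg h0]
    have := psum'_succ m l h0
    omega

lemma fwd_key {k : Type*} [Field k] {n : ℕ} (I : Ideal (MvPolynomial (Fin n) k))
    (hSS : ∀ (m : Fin n →₀ ℕ) (i j : Fin n), i < j → monomial m (1 : k) ∈ I →
        0 < m j →
        monomial (m - Finsupp.single j 1 + Finsupp.single i 1) (1 : k) ∈ I) :
    ∀ N (u v : Fin n → ℕ), Monotone u → Monotone v → (∀ i, u i ≤ v i) →
      (∑ l, (v l - u l)) ≤ N →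
      monomial (expOf u) (1 : k) ∈ I → monomial (expOf v) (1 : k) ∈ I := by
  intro N
  induction N with
  | zero =>
    intro u v hu hv huv hsum hmem
    have huv' : u = v := by
      funext l
      have h1 : v l - u l = 0 :=
        Finset.sum_eq_zero_iff.mp (Nat.le_zero.mp hsum) l (Finset.mem_univ l)
      have := huv l
      omega
    rwa [huv'] at hmem
  | succ N ih =>
    intro u v hu hv huv hsum hmem
    by_cases heq : u = v
    · rwa [heq] at hmem
    · have hne : (Finset.univ.filter (fun l : Fin n => u l < v l)).Nonempty := by
        by_contra hc
        apply heq
        funext l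
        rw [Finset.not_nonempty_iff_eq_empty, Finset.filter_eq_empty_iff] at hc
        have := hc (Finset.mem_univ l)
        have := huv l
        omega
      set i := (Finset.univ.filter (fun l : Fin n => u l < v l)).max' hne with hi
      have hiuv : u i < v i := by
        have := (Finset.univ.filter (fun l : Fin n => u l < v l)).max'_mem hne
        simpa using this
      have hmax : ∀ l : Fin n, i < l → u l = v l := by
        intro l hl
        by_contra hc
        have hlt : u l < v l := lt_of_le_of_ne (huv l) hc
        have : l ≤ i := Finset.le_max' _ l (by simpa using hlt)
        exact absurd hl (not_lt.mpr this)
      set w : Fin n → ℕ := fun l => u l + (if (l : ℕ) = (i : ℕ) then 1 else 0) with hw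
      have hwi : w i = u i + 1 := by simp [hw]
      have hwne : ∀ l : Fin n, (l : ℕ) ≠ (i : ℕ) → w l = u l := by
        intro l hl; simp [hw, hl]
      have hwmono : Monotone w := by
        intro a b hab
        rcases eq_or_lt_of_le hab with rfl | hab
        · exact le_rfl
        · have hab' : (a : ℕ) < (b : ℕ) := hab
          have h1 : u a ≤ u b := hu (le_of_lt hab)
          by_cases ha : (a : ℕ) = (i : ℕ)
          · have hai : a = i := Fin.ext ha
            subst hai
            have hbi : i < b := hab
            have h2 : u b = v b := hmax b hbi
            have h3 : v i ≤ v b := hv (le_of_lt hbi)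
            rw [hwne b (by omega), hwi]
            omega
          · by_cases hb : (b : ℕ) = (i : ℕ)
            · have hbi : b = i := Fin.ext hb
              subst hbi
              rw [hwne a ha, hwi]
              omega
            · rw [hwne a ha, hwne b hb]; exact h1
      have hwle : ∀ l, w l ≤ v l := by
        intro l
        by_cases hl : (l : ℕ) = (i : ℕ)
        · have : l = i := Fin.ext hl
          subst this
          rw [hwi]; omega
        · rw [hwne l hl]; exact huv l
      have hsum' : (∑ l, (v l - w l)) ≤ N := by
        have hterm : ∀ l : Fin n, v l - u l = (v l - w l) + (if l = i then 1 else 0) := by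
          intro l
          by_cases hl : l = i
          · subst hl; rw [hwi, if_pos rfl]; omega
          · rw [hwne l (fun h => hl (Fin.ext h)), if_neg hl]; omega
        have h1 : (∑ l, (v l - u l)) = (∑ l, (v l - w l)) + 1 := by
          rw [Finset.sum_congr rfl (fun l _ => hterm l), Finset.sum_add_distrib,
            Finset.sum_ite_eq' Finset.univ i (fun _ => 1), if_pos (Finset.mem_univ i)]
        omega
      have hwmem : monomial (expOf w) (1 : k) ∈ I := by
        by_cases hlast : (i : ℕ) + 1 = n
        · -- i is the last index: multiply by X i
          have hexp : expOf w = expOf u + Finsupp.single i 1 := by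
            ext l
            rw [Finsupp.add_apply, Finsupp.single_apply, expOf_apply', expOf_apply']
            by_cases hl : (l : ℕ) = (i : ℕ)
            · have hli : l = i := Fin.ext hl
              subst hli
              rw [if_pos rfl, hwi]
              by_cases h0 : (i : ℕ) = 0
              · rw [dif_pos h0, dif_pos h0]; omega
              · rw [dif_neg h0, dif_neg h0]
                rw [hwne ⟨(i : ℕ) - 1, lt_of_le_of_lt (Nat.sub_le _ _) i.isLt⟩ (by show (i : ℕ) - 1 ≠ (i : ℕ); omega)]
                have : u ⟨(i : ℕ) - 1, lt_of_le_of_lt (Nat.sub_le _ _) i.isLt⟩ ≤ u i :=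
                  hu (by rw [Fin.le_def]; show (i : ℕ) - 1 ≤ (i : ℕ); omega)
                omega
            · rw [if_neg (by rw [Fin.ext_iff]; omega), hwne l hl]
              by_cases h0 : (l : ℕ) = 0
              · rw [dif_pos h0, dif_pos h0]; omega
              · rw [dif_neg h0, dif_neg h0]
                rw [hwne ⟨(l : ℕ) - 1, lt_of_le_of_lt (Nat.sub_le _ _) l.isLt⟩
                  (by simp; have := l.isLt; omega)]
                omega
          rw [hexp]
          have hmul : monomial (expOf u + Finsupp.single i 1) (1 : k)
              = monomial (expOf u) 1 * monomial (Finsupp.single i 1) 1 := by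
            rw [monomial_mul, one_mul]
          rw [hmul]
          exact Ideal.mul_mem_right _ I hmem
        · -- exchange with j = i + 1
          have hjlt : (i : ℕ) + 1 < n := by have := i.isLt; omega
          set j : Fin n := ⟨(i : ℕ) + 1, hjlt⟩ with hj
          have hjval : (j : ℕ) = (i : ℕ) + 1 := rfl
          have hij : i < j := by rw [Fin.lt_def]; omega
          have huij : u i + 1 ≤ u j := by
            have h1 : u j = v j := hmax j hij
            have h2 : v i ≤ v j := hv (le_of_lt hij)
            omega
          have hpredj : (⟨(j : ℕ) - 1, lt_of_le_of_lt (Nat.sub_le _ _) j.isLt⟩ : Fin n) = i :=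
            Fin.ext (show (j : ℕ) - 1 = (i : ℕ) by omega)
          have hpos : 0 < expOf u j := by
            rw [expOf_apply', dif_neg (by omega), hpredj]
            omega
          have hexp : expOf w = expOf u - Finsupp.single j 1 + Finsupp.single i 1 := by
            ext l
            rw [Finsupp.add_apply, Finsupp.tsub_apply, Finsupp.single_apply,
              Finsupp.single_apply, expOf_apply', expOf_apply']
            by_cases hl : (l : ℕ) = (i : ℕ)
            · have hli : l = i := Fin.ext hl
              subst hli
              rw [if_pos rfl, if_neg (by rw [Fin.ext_iff]; omega), hwi]
              by_cases h0 : (i : ℕ) = 0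
              · rw [dif_pos h0, dif_pos h0]; omega
              · rw [dif_neg h0, dif_neg h0]
                rw [hwne ⟨(i : ℕ) - 1, lt_of_le_of_lt (Nat.sub_le _ _) i.isLt⟩ (by show (i : ℕ) - 1 ≠ (i : ℕ); omega)]
                have : u ⟨(i : ℕ) - 1, lt_of_le_of_lt (Nat.sub_le _ _) i.isLt⟩ ≤ u i :=
                  hu (by rw [Fin.le_def]; show (i : ℕ) - 1 ≤ (i : ℕ); omega)
                omega
            · by_cases hlj : (l : ℕ) = (j : ℕ)
              · have hlj' : l = j := Fin.ext hlj
                subst hlj'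
                rw [if_pos rfl, if_neg (by rw [Fin.ext_iff]; omega)]
                have h0 : (j : ℕ) ≠ 0 := by omega
                rw [dif_neg h0, dif_neg h0, hpredj, hwne j (by omega), hwi]
                omega
              · rw [if_neg (by rw [Fin.ext_iff]; omega), if_neg (by rw [Fin.ext_iff]; omega),
                  hwne l hl]
                by_cases h0 : (l : ℕ) = 0
                · rw [dif_pos h0, dif_pos h0]; omega
                · rw [dif_neg h0, dif_neg h0]
                  rw [hwne ⟨(l : ℕ) - 1, lt_of_le_of_lt (Nat.sub_le _ _) l.isLt⟩ (by simp; omega)]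
                  omega
          rw [hexp]
          exact hSS (expOf u) i j hij hmem hpos
      exact ih w v hwmono hv hwle hsum' hwmem

lemma bwd_key {k : Type*} [Field k] {n : ℕ} (I : Ideal (MvPolynomial (Fin n) k))
    (hUp : ∀ u v : Fin n → ℕ, Monotone u → Monotone v → (∀ i, u i ≤ v i) →
        monomial (expOf u) (1 : k) ∈ I → monomial (expOf v) (1 : k) ∈ I)
    (m : Fin n →₀ ℕ) (i j : Fin n) (hij : i < j) (hmem : monomial m (1 : k) ∈ I)
    (hmj : 0 < m j) :
    monomial (m - Finsupp.single j 1 + Finsupp.single i 1) (1 : k) ∈ I := by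
  have hij' : (i : ℕ) < (j : ℕ) := hij
  set u : Fin n → ℕ := psum' m with hu'
  have hu : Monotone u := psum'_mono m
  have hexpu : expOf u = m := expOf_psum' m
  have hstep : ∀ l : Fin n, (l : ℕ) ≠ 0 →
      u l = u ⟨(l : ℕ) - 1, lt_of_le_of_lt (Nat.sub_le _ _) l.isLt⟩ + m l :=
    fun l h => psum'_succ m l h
  have hzero : ∀ l : Fin n, (l : ℕ) = 0 → u l = m l := fun l h => psum'_zero m l h
  set v : Fin n → ℕ := fun l => u l + (if (i : ℕ) ≤ (l : ℕ) ∧ (l : ℕ) < (j : ℕ) then 1 else 0)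
    with hv'
  have hvin : ∀ l : Fin n, ((i : ℕ) ≤ (l : ℕ) ∧ (l : ℕ) < (j : ℕ)) → v l = u l + 1 := by
    intro l hl; simp only [hv', if_pos hl]
  have hvout : ∀ l : Fin n, ¬((i : ℕ) ≤ (l : ℕ) ∧ (l : ℕ) < (j : ℕ)) → v l = u l := by
    intro l hl; simp only [hv', if_neg hl, add_zero]
  have hj0 : (j : ℕ) ≠ 0 := by omega
  have hupj : u j = u ⟨(j : ℕ) - 1, lt_of_le_of_lt (Nat.sub_le _ _) j.isLt⟩ + m j :=
    hstep j hj0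
  have hv : Monotone v := by
    intro a b hab
    have hab' : (a : ℕ) ≤ (b : ℕ) := hab
    have h1 : u a ≤ u b := hu hab
    by_cases hA : (i : ℕ) ≤ (a : ℕ) ∧ (a : ℕ) < (j : ℕ)
    · by_cases hB : (i : ℕ) ≤ (b : ℕ) ∧ (b : ℕ) < (j : ℕ)
      · rw [hvin a hA, hvin b hB]; omega
      · -- j ≤ b
        rw [hvin a hA, hvout b hB]
        have hjb : (j : ℕ) ≤ (b : ℕ) := by omega
        have h2 : u a ≤ u ⟨(j : ℕ) - 1, lt_of_le_of_lt (Nat.sub_le _ _) j.isLt⟩ :=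
          hu (by rw [Fin.le_def]; show (a : ℕ) ≤ (j : ℕ) - 1; omega)
        have h3 : u j ≤ u b := hu (by rw [Fin.le_def]; omega)
        omega
    · by_cases hB : (i : ℕ) ≤ (b : ℕ) ∧ (b : ℕ) < (j : ℕ)
      · rw [hvout a hA, hvin b hB]; omega
      · rw [hvout a hA, hvout b hB]; exact h1
  have huv : ∀ l, u l ≤ v l := by
    intro l
    by_cases hl : (i : ℕ) ≤ (l : ℕ) ∧ (l : ℕ) < (j : ℕ)
    · rw [hvin l hl]; omega
    · rw [hvout l hl]
  have hexpv : expOf v = m - Finsupp.single j 1 + Finsupp.single i 1 := by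
    ext l
    rw [Finsupp.add_apply, Finsupp.tsub_apply, Finsupp.single_apply, Finsupp.single_apply,
      expOf_apply']
    by_cases hl : (l : ℕ) = (i : ℕ)
    · have hli : l = i := Fin.ext hl
      subst hli
      rw [if_neg (by rw [Fin.ext_iff]; omega), if_pos rfl]
      rw [hvin l ⟨le_rfl, by omega⟩]
      by_cases h0 : (l : ℕ) = 0
      · rw [dif_pos h0]
        have := hzero l h0
        omega
      · rw [dif_neg h0]
        rw [hvout ⟨(l : ℕ) - 1, lt_of_le_of_lt (Nat.sub_le _ _) l.isLt⟩
          (by show ¬((l : ℕ) ≤ (l : ℕ) - 1 ∧ (l : ℕ) - 1 < (j : ℕ)); omega)]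
        have := hstep l h0
        omega
    · by_cases hlj : (l : ℕ) = (j : ℕ)
      · have hljf : l = j := Fin.ext hlj
        subst hljf
        rw [if_pos rfl, if_neg (by rw [Fin.ext_iff]; omega)]
        rw [hvout l (by omega)]
        rw [dif_neg hj0]
        rw [hvin ⟨(l : ℕ) - 1, lt_of_le_of_lt (Nat.sub_le _ _) l.isLt⟩
          (by show (i : ℕ) ≤ (l : ℕ) - 1 ∧ (l : ℕ) - 1 < (l : ℕ); omega)]
        omega
      · rw [if_neg (by rw [Fin.ext_iff]; omega), if_neg (by rw [Fin.ext_iff]; omega)]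
        by_cases h0 : (l : ℕ) = 0
        · rw [dif_pos h0]
          have := hzero l h0
          rw [hvout l (by omega)]
          omega
        · rw [dif_neg h0]
          have h1 := hstep l h0
          by_cases hin : (i : ℕ) ≤ (l : ℕ) ∧ (l : ℕ) < (j : ℕ)
          · rw [hvin l hin, hvin ⟨(l : ℕ) - 1, lt_of_le_of_lt (Nat.sub_le _ _) l.isLt⟩
              (by show (i : ℕ) ≤ (l : ℕ) - 1 ∧ (l : ℕ) - 1 < (j : ℕ); omega)]
            omega
          · rw [hvout l hin, hvout ⟨(l : ℕ) - 1, lt_of_le_of_lt (Nat.sub_le _ _) l.isLt⟩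
              (by show ¬((i : ℕ) ≤ (l : ℕ) - 1 ∧ (l : ℕ) - 1 < (j : ℕ)); omega)]
            omega
  have hres := hUp u v hu hv huv (by rw [hexpu]; exact hmem)
  rwa [hexpv] at hres

/-- A monomial ideal `I` in `k[x₁,…,xₙ]` (with `x₁ > x₂ > ⋯ > xₙ`) is strongly
stable if and only if the set of monotone maps `u : [n] → ℕ` with the monomial
`x₁^{u₁} x₂^{u₂−u₁} ⋯ xₙ^{uₙ−u_{n−1}}` in `I` is an upper set for the pointwise
order on monotone maps. -/
theorem stronglyStable_iff_upperSet
    {k : Type*} [Field k] {n : ℕ} (I : Ideal (MvPolynomial (Fin n) k))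
    (hI : ∃ S : Set (Fin n →₀ ℕ),
      I = Ideal.span ((fun s => monomial s (1 : k)) '' S)) :
    (∀ (m : Fin n →₀ ℕ) (i j : Fin n), i < j → monomial m (1 : k) ∈ I →
        0 < m j →
        monomial (m - Finsupp.single j 1 + Finsupp.single i 1) (1 : k) ∈ I)
      ↔ (∀ u v : Fin n → ℕ, Monotone u → Monotone v → (∀ i, u i ≤ v i) →
          monomial (expOf u) (1 : k) ∈ I → monomial (expOf v) (1 : k) ∈ I) := by
  constructor
  · intro hSS u v hu hv huv hmem
    exact fwd_key I hSS (∑ l, (v l - u l)) u v hu hv huv le_rfl hmem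
  · intro hUp m i j hij hmem hmj
    exact bwd_key I hUp m i j hij hmem hmj
end

section
/- Let k be a field of characteristic zero and I a homogeneous (graded) ideal in k[x₁,…,xₙ]. Then I is Borel-fixed (i.e., g.I = I for every invertible upper triangular n×n matrix g over k, acting by the k-algebra automorphism x_j ↦ Σ_i g_{ij} x_i) if and only if I is a monomial ideal and is strongly stable. -/
/-!
Diagonal matrices are Borel, so a Borel-fixed ideal is torus-fixed. Scaling a single variable
`xᵢ` by `2` multiplies `x^m` by `2^{mᵢ}`, and these factors are distinct in characteristic
zero; subtracting a multiple of `p` from its rescaling therefore kills one chosen monomial and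
keeps another one, and induction on the size of the support shows that a torus-fixed ideal contains
every monomial occurring in its elements, i.e. it is a monomial ideal. The transvection
`xⱼ ↦ xⱼ + xᵢ` (`i < j`) sends `x^m` to a polynomial in which `x^m xᵢ / xⱼ` has
coefficient `mⱼ ≠ 0`, which gives strong stability.

Conversely, an upper triangular substitution sends `xⱼ` to a combination of `xᵢ` with `i ≤ j`,
hence `x^s` to a combination of monomials obtained from `s` by repeatedly moving one unit of
exponent to a smaller variable; a strongly stable monomial ideal contains all of them. This gives
`g.I ≤ I` for every invertible upper triangular `g`, and applying it to `g⁻¹` gives equality.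
-/

namespace MvPolynomial

variable {σ R : Type*}

section MonomialIdeal

variable [CommSemiring R]

def IsMonomialIdeal (I : Ideal (MvPolynomial σ R)) : Prop :=
  ∃ S : Set (σ →₀ ℕ), I = Ideal.span ((fun s => monomial s (1 : R)) '' S)

theorem mem_of_forall_monomial_mem {I : Ideal (MvPolynomial σ R)} {p : MvPolynomial σ R}
    (h : ∀ m ∈ p.support, monomial m (1 : R) ∈ I) : p ∈ I := by
  rw [as_sum p]
  refine Ideal.sum_mem _ fun m hm => ?_
  simpa only [C_mul_monomial, mul_one] using I.mul_mem_left (C (coeff m p)) (h m hm)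

theorem isMonomialIdeal_iff {I : Ideal (MvPolynomial σ R)} :
    IsMonomialIdeal I ↔ ∀ p ∈ I, ∀ m ∈ p.support, monomial m (1 : R) ∈ I := by
  constructor
  · rintro ⟨S, rfl⟩ p hp m hm
    obtain ⟨s, hs, hsm⟩ := mem_ideal_span_monomial_image.mp hp m hm
    refine mem_ideal_span_monomial_image.mpr fun m' hm' => ⟨s, hs, ?_⟩
    rwa [Finset.mem_singleton.mp (support_monomial_subset hm')]
  · refine fun h => ⟨{m | monomial m 1 ∈ I}, le_antisymm (fun p hp => ?_) ?_⟩
    · exact mem_of_forall_monomial_mem fun m hm => Ideal.subset_span ⟨m, h p hp m hm, rfl⟩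
    · rw [Ideal.span_le]
      rintro _ ⟨m, hm, rfl⟩
      exact hm

end MonomialIdeal

section Torus

theorem aeval_smul_X_monomial [CommSemiring R] (t : σ → R) (s : σ →₀ ℕ) (a : R) :
    aeval (fun j => t j • X j) (monomial s a) = monomial s ((s.prod fun j e => t j ^ e) * a) := by
  rw [aeval_monomial, monomial_eq, algebraMap_eq, map_mul, map_finsuppProd]
  simp only [smul_eq_C_mul, mul_pow, Finsupp.prod_mul, map_pow]
  ring

theorem coeff_aeval_smul_X [CommSemiring R] (t : σ → R) (p : MvPolynomial σ R)
    (m : σ →₀ ℕ) :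
    coeff m (aeval (fun j => t j • X j) p) = (m.prod fun j e => t j ^ e) * coeff m p := by
  classical
  induction p using MvPolynomial.induction_on' with
  | monomial s a =>
    rw [aeval_smul_X_monomial, coeff_monomial, coeff_monomial]
    split_ifs with h <;> simp [h]
  | add p q hp hq => rw [map_add, coeff_add, coeff_add, hp, hq, mul_add]

variable {k : Type*} [Field k]

def IsTorusStable (I : Ideal (MvPolynomial σ k)) : Prop :=
  ∀ t : σ → k, (∀ j, t j ≠ 0) → ∀ p ∈ I, aeval (fun j => t j • X j) p ∈ I

variable [CharZero k]

theorem IsTorusStable.exists_mem_support_subset_erase [DecidableEq σ]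
    {I : Ideal (MvPolynomial σ k)} (hI : IsTorusStable I) {p : MvPolynomial σ k} (hp : p ∈ I)
    {m m' : σ →₀ ℕ} (hm : m ∈ p.support) (hne : m ≠ m') :
    ∃ q ∈ I, m ∈ q.support ∧ q.support ⊆ p.support.erase m' := by
  obtain ⟨i, hi⟩ := Finsupp.ne_iff.mp hne
  set t : σ → k := Pi.mulSingle i 2
  have hprod : ∀ v : σ →₀ ℕ, (v.prod fun j e => t j ^ e) = 2 ^ v i := by
    intro v
    rw [Finsupp.prod, Finset.prod_eq_single i (fun j _ hj => by simp [t, hj])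
      (fun hvi => by simp [Finsupp.notMem_support_iff.mp hvi])]
    simp [t]
  have hcoeff : ∀ v, coeff v (aeval (fun j => t j • X j) p - C (2 ^ m' i : k) * p)
      = (2 ^ v i - 2 ^ m' i) * coeff v p := by
    intro v
    rw [coeff_sub, coeff_aeval_smul_X, hprod, coeff_C_mul, sub_mul]
  have h2 : ∀ a b : ℕ, (2 : k) ^ a = 2 ^ b → a = b := fun a b h =>
    Nat.pow_right_injective le_rfl (by exact_mod_cast h)
  refine ⟨aeval (fun j => t j • X j) p - C (2 ^ m' i : k) * p,
    I.sub_mem (hI _ (fun j => ?_) p hp) (I.mul_mem_left _ hp), ?_, fun v hv => ?_⟩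
  · by_cases hj : j = i <;> simp [t, hj]
  · rw [mem_support_iff, hcoeff]
    exact mul_ne_zero (sub_ne_zero.mpr fun h => hi (h2 _ _ h)) (mem_support_iff.mp hm)
  · rw [mem_support_iff, hcoeff] at hv
    exact Finset.mem_erase.mpr ⟨fun h => hv (by rw [h, sub_self, zero_mul]),
      mem_support_iff.mpr (right_ne_zero_of_mul hv)⟩

theorem IsTorusStable.isMonomialIdeal {I : Ideal (MvPolynomial σ k)} (hI : IsTorusStable I) :
    IsMonomialIdeal I := by
  classical
  refine isMonomialIdeal_iff.mpr fun p hp m hm => ?_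
  induction hN : p.support.card using Nat.strong_induction_on generalizing p with
  | _ N ih =>
  by_cases hsingle : p.support = {m}
  · obtain ⟨c, hc, rfl⟩ : ∃ c ≠ (0 : k), p = monomial m c :=
      ⟨coeff m p, mem_support_iff.mp hm,
        (as_sum p).trans (by rw [hsingle, Finset.sum_singleton])⟩
    simpa only [C_mul_monomial, inv_mul_cancel₀ hc] using I.mul_mem_left (C c⁻¹) hp
  · obtain ⟨m', hm', hne⟩ : ∃ m' ∈ p.support, m' ≠ m := by
      by_contra! h
      exact hsingle (Finset.eq_singleton_iff_unique_mem.mpr ⟨hm, h⟩)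
    obtain ⟨q, hq, hmq, hsub⟩ := hI.exists_mem_support_subset_erase hp hm hne.symm
    refine ih _ ?_ q hq hmq rfl
    exact hN ▸ Finset.card_lt_card (hsub.trans_ssubset (Finset.erase_ssubset hm'))

end Torus

section LinearSubst

variable [CommSemiring R] [Fintype σ]

noncomputable def linearSubst (g : Matrix σ σ R) :
    MvPolynomial σ R →ₐ[R] MvPolynomial σ R :=
  aeval fun j => ∑ i, g i j • X i

theorem linearSubst_X (g : Matrix σ σ R) (j : σ) : linearSubst g (X j) = ∑ i, g i j • X i :=
  aeval_X _ j

theorem linearSubst_mul (g g' : Matrix σ σ R) :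
    linearSubst (g * g') = (linearSubst g).comp (linearSubst g') := by
  refine algHom_ext fun j => ?_
  simp only [AlgHom.comp_apply, linearSubst_X, map_sum, map_smul, Matrix.mul_apply,
    Finset.smul_sum, Finset.sum_smul, smul_smul]
  rw [Finset.sum_comm]
  exact Finset.sum_congr rfl fun i _ => Finset.sum_congr rfl fun l _ => by rw [mul_comm]

theorem linearSubst_one [DecidableEq σ] : linearSubst (1 : Matrix σ σ R) = AlgHom.id R _ :=
  algHom_ext fun j => by simp [linearSubst_X, Matrix.one_apply]

theorem linearSubst_diagonal [DecidableEq σ] (t : σ → R) :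
    linearSubst (Matrix.diagonal t) = aeval fun j => t j • X j :=
  algHom_ext fun j => by simp [linearSubst_X, Matrix.diagonal_apply]

end LinearSubst

theorem coeff_X_add_X_pow [CommSemiring R] {i j : σ} (hij : i ≠ j) (b : ℕ) :
    coeff (Finsupp.single j b + Finsupp.single i 1) ((X j + X i : MvPolynomial σ R) ^ (b + 1))
      = b + 1 := by
  classical
  have hterm : ∀ c : ℕ,
      (X j ^ c * X i ^ (b + 1 - c) * ((b + 1).choose c : MvPolynomial σ R))
        = monomial (Finsupp.single j c + Finsupp.single i (b + 1 - c)) ((b + 1).choose c : R) := by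
    intro c
    rw [X_pow_eq_monomial, X_pow_eq_monomial, monomial_mul, ← map_natCast C, mul_comm,
      C_mul_monomial, mul_one, mul_one]
  have hexp : ∀ c, Finsupp.single j c + Finsupp.single i (b + 1 - c)
      = Finsupp.single j b + Finsupp.single i 1 ↔ c = b := by
    refine fun c => ⟨fun h => ?_, fun h => by rw [h, Nat.add_sub_cancel_left]⟩
    simpa [hij.symm] using congrArg (· j) h
  simp only [add_pow, coeff_sum, hterm, coeff_monomial, hexp, Finset.sum_ite_eq',
    Finset.mem_range]
  rw [if_pos (by omega), Nat.choose_succ_self_right, Nat.cast_succ]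

section Transvection

variable [CommRing R] [Fintype σ] [DecidableEq σ]

theorem linearSubst_transvection_X_self (i j : σ) (c : R) :
    linearSubst (Matrix.transvection i j c) (X j) = X j + c • X i := by
  simp [linearSubst_X, Matrix.transvection, Matrix.add_apply, add_smul, Finset.sum_add_distrib,
    Matrix.one_apply, Matrix.single_apply]

theorem linearSubst_transvection_X_of_ne {i j l : σ} (hl : l ≠ j) (c : R) :
    linearSubst (Matrix.transvection i j c) (X l) = X l := by
  simp [linearSubst_X, Matrix.transvection, Matrix.add_apply, Matrix.one_apply, hl.symm]

theorem coeff_linearSubst_transvection_monomial {i j : σ} (hij : i ≠ j) {u : σ →₀ ℕ}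
    (hu : u j = 0) (b : ℕ) :
    coeff (u + (Finsupp.single j b + Finsupp.single i 1))
      (linearSubst (Matrix.transvection i j (1 : R)) (monomial (u + Finsupp.single j (b + 1)) 1))
      = b + 1 := by
  have hfix : linearSubst (Matrix.transvection i j (1 : R)) (monomial u 1) = monomial u 1 := by
    rw [monomial_eq, map_mul, algHom_C, map_finsuppProd]
    refine congrArg _ (Finsupp.prod_congr fun l hl => ?_)
    rw [map_pow, linearSubst_transvection_X_of_ne (ne_of_mem_of_not_mem hl (by simpa using hu))]
  have hsplit :
      monomial (u + Finsupp.single j (b + 1)) (1 : R) = monomial u 1 * X j ^ (b + 1) := by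
    rw [X_pow_eq_monomial, monomial_mul, one_mul]
  rw [hsplit, map_mul, hfix, map_pow,
    linearSubst_transvection_X_self, one_smul, coeff_monomial_mul, one_mul, coeff_X_add_X_pow hij]

end Transvection

section StronglyStable

open Relation

def BorelMove [LT σ] (s m : σ →₀ ℕ) : Prop :=
  ∃ u i j, i < j ∧ s = u + Finsupp.single j 1 ∧ m = u + Finsupp.single i 1

theorem BorelMove.add_right [LT σ] {s m : σ →₀ ℕ} (h : BorelMove s m) (t : σ →₀ ℕ) :
    BorelMove (s + t) (m + t) := by
  obtain ⟨u, i, j, hij, rfl, rfl⟩ := h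
  exact ⟨u + t, i, j, hij, add_right_comm .., add_right_comm ..⟩

theorem reflTransGen_borelMove_add [LT σ] {s m s' m' : σ →₀ ℕ}
    (h : ReflTransGen BorelMove s m) (h' : ReflTransGen BorelMove s' m') :
    ReflTransGen BorelMove (s + s') (m + m') := by
  refine (h.lift (· + s') fun a b hab => hab.add_right s').trans ?_
  simpa only [add_comm m] using h'.lift (· + m) fun a b hab => hab.add_right m

theorem forall_mem_support_aeval_monomial [CommSemiring R] {τ : Type*}
    (r : (σ →₀ ℕ) → (τ →₀ ℕ) → Prop) (hr₀ : r 0 0)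
    (hr : ∀ s m s' m', r s m → r s' m' → r (s + s') (m + m')) {f : σ → MvPolynomial τ R}
    (hf : ∀ j, ∀ m ∈ (f j).support, r (Finsupp.single j 1) m) (s : σ →₀ ℕ) :
    ∀ m ∈ (aeval f (monomial s (1 : R))).support, r s m := by
  classical
  have hone : ∀ m ∈ (1 : MvPolynomial τ R).support, r 0 m := fun m hm => by
    rwa [Finset.mem_singleton.mp (support_monomial_subset hm)]
  have hmul : ∀ s s' p q, (∀ m ∈ p.support, r s m) → (∀ m ∈ q.support, r s' m) →
      ∀ m ∈ (p * q : MvPolynomial τ R).support, r (s + s') m := by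
    intro s s' p q hp hq m hm
    obtain ⟨a, ha, b, hb, rfl⟩ := Finset.mem_add.mp (support_mul p q hm)
    exact hr _ _ _ _ (hp a ha) (hq b hb)
  induction s using Finsupp.induction_linear with
  | zero => simpa using hone
  | add s s' hs hs' =>
    rw [← one_mul (1 : R), ← monomial_mul, map_mul]
    exact hmul _ _ _ _ hs hs'
  | single j e =>
    rw [← X_pow_eq_monomial, map_pow, aeval_X]
    induction e with
    | zero => simpa using hone
    | succ e ih =>
      rw [pow_succ, Finsupp.single_add]
      exact hmul _ _ _ _ ih (hf j)

theorem reflTransGen_borelMove_of_mem_support_linearSubst [CommSemiring R] [Fintype σ]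
    [LinearOrder σ] {g : Matrix σ σ R} (hg : g.BlockTriangular id) {s m : σ →₀ ℕ}
    (hm : m ∈ (linearSubst g (monomial s 1)).support) : ReflTransGen BorelMove s m := by
  classical
  refine forall_mem_support_aeval_monomial _ ReflTransGen.refl
    (fun _ _ _ _ => reflTransGen_borelMove_add) (fun j m hm => ?_) s m hm
  obtain ⟨i, -, hi⟩ := Finset.mem_biUnion.mp (support_sum hm)
  rw [Finset.mem_singleton.mp (support_monomial_subset (support_smul hi))]
  rcases lt_trichotomy i j with hij | rfl | hji
  · exact ReflTransGen.single ⟨0, i, j, hij, by simp, by simp⟩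
  · exact ReflTransGen.refl
  · simp [hg hji] at hi

variable [CommSemiring R] [LinearOrder σ]

def IsStronglyStable (I : Ideal (MvPolynomial σ R)) : Prop :=
  ∀ (m : σ →₀ ℕ) (i j : σ), i < j → monomial m (1 : R) ∈ I → 0 < m j →
    monomial (m - Finsupp.single j 1 + Finsupp.single i 1) (1 : R) ∈ I

theorem IsStronglyStable.monomial_mem_of_reflTransGen {I : Ideal (MvPolynomial σ R)}
    (hI : IsStronglyStable I) {s m : σ →₀ ℕ} (h : ReflTransGen BorelMove s m)
    (hs : monomial s (1 : R) ∈ I) : monomial m (1 : R) ∈ I := by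
  induction h with
  | refl => exact hs
  | tail _ hmove ih =>
    obtain ⟨u, i, j, hij, rfl, rfl⟩ := hmove
    simpa using hI _ i j hij ih (by simp)

theorem IsStronglyStable.map_linearSubst_le [Fintype σ] {I : Ideal (MvPolynomial σ R)}
    (hss : IsStronglyStable I) (hmon : IsMonomialIdeal I) {g : Matrix σ σ R}
    (hg : g.BlockTriangular id) : I.map (linearSubst g) ≤ I := by
  obtain ⟨S, hS⟩ := hmon
  conv_lhs => rw [hS]
  rw [Ideal.map_span, Ideal.span_le]
  rintro _ ⟨_, ⟨s, hs, rfl⟩, rfl⟩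
  refine mem_of_forall_monomial_mem fun m hm => ?_
  exact hss.monomial_mem_of_reflTransGen
    (reflTransGen_borelMove_of_mem_support_linearSubst hg hm)
    (hS ▸ Ideal.subset_span ⟨s, hs, rfl⟩)

end StronglyStable

section BorelFixed

variable [Fintype σ] [DecidableEq σ] [LinearOrder σ]

def IsBorelFixed [CommRing R] (I : Ideal (MvPolynomial σ R)) : Prop :=
  ∀ g : Matrix σ σ R, IsUnit g → g.BlockTriangular id → I.map (linearSubst g) = I

theorem IsStronglyStable.isBorelFixed [CommRing R] {I : Ideal (MvPolynomial σ R)}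
    (hss : IsStronglyStable I) (hmon : IsMonomialIdeal I) : IsBorelFixed I := by
  intro g hg hup
  have := hg.invertible
  refine le_antisymm (hss.map_linearSubst_le hmon hup) fun p hp => ?_
  have hp' : linearSubst g⁻¹ p ∈ I :=
    hss.map_linearSubst_le hmon (Matrix.blockTriangular_inv_of_blockTriangular hup)
      (Ideal.mem_map_of_mem _ hp)
  simpa [← AlgHom.comp_apply, ← linearSubst_mul, linearSubst_one] using
    Ideal.mem_map_of_mem (linearSubst g) hp'

theorem IsBorelFixed.linearSubst_mem [CommRing R] {I : Ideal (MvPolynomial σ R)}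
    (hI : IsBorelFixed I) {g : Matrix σ σ R} (hg : IsUnit g) (hup : g.BlockTriangular id)
    {p : MvPolynomial σ R} (hp : p ∈ I) : linearSubst g p ∈ I :=
  hI g hg hup ▸ Ideal.mem_map_of_mem _ hp

variable {k : Type*} [Field k] {I : Ideal (MvPolynomial σ k)}

theorem IsBorelFixed.isTorusStable (hI : IsBorelFixed I) : IsTorusStable I := fun t ht p hp => by
  rw [← linearSubst_diagonal]
  exact hI.linearSubst_mem (Matrix.isUnit_diagonal.mpr (Pi.isUnit_iff.mpr fun j => (ht j).isUnit))
    (Matrix.blockTriangular_diagonal t) hp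

theorem IsBorelFixed.isStronglyStable [CharZero k] (hI : IsBorelFixed I) : IsStronglyStable I := by
  intro m i j hij hm hmj
  have htri : (Matrix.transvection i j (1 : k)).BlockTriangular id := fun a c hca => by
    have hac : a ≠ c := hca.ne'
    have : ¬ (i = a ∧ j = c) := fun ⟨hia, hjc⟩ => (hia ▸ hjc ▸ hij).not_gt hca
    simp [Matrix.transvection, Matrix.one_apply_ne hac, this]
  have hunit : IsUnit (Matrix.transvection i j (1 : k)) := by
    rw [Matrix.isUnit_iff_isUnit_det, Matrix.det_transvection_of_ne i j hij.ne]
    exact isUnit_one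
  obtain ⟨b, hb⟩ : ∃ b, m j = b + 1 := Nat.exists_eq_add_one.mpr hmj
  obtain ⟨u, hu, rfl⟩ : ∃ u : σ →₀ ℕ, u j = 0 ∧ m = u + Finsupp.single j (b + 1) :=
    ⟨m.erase j, Finsupp.erase_same .., by rw [← hb, Finsupp.erase_add_single]⟩
  have htarget : u + Finsupp.single j (b + 1) - Finsupp.single j 1 + Finsupp.single i 1
      = u + (Finsupp.single j b + Finsupp.single i 1) := by
    rw [Finsupp.single_add, ← add_assoc, add_tsub_cancel_right, add_assoc]
  refine isMonomialIdeal_iff.mp hI.isTorusStable.isMonomialIdeal _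
    (hI.linearSubst_mem hunit htri hm) _ ?_
  rw [mem_support_iff, htarget, coeff_linearSubst_transvection_monomial hij.ne hu]
  exact_mod_cast b.succ_ne_zero

end BorelFixed

end MvPolynomial

open MvPolynomial

theorem borelFixed_iff_stronglyStable_general
    {k : Type*} [Field k] [CharZero k] {n : ℕ}
    (I : Ideal (MvPolynomial (Fin n) k)) :
    (∀ g : Matrix (Fin n) (Fin n) k, IsUnit g → (∀ i j : Fin n, j < i → g i j = 0) →
        I.map (aeval fun j : Fin n => ∑ i : Fin n, g i j • X i :
          MvPolynomial (Fin n) k →ₐ[k] MvPolynomial (Fin n) k) = I)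
      ↔ ((∃ S : Set (Fin n →₀ ℕ),
            I = Ideal.span ((fun s => monomial s (1 : k)) '' S)) ∧
          (∀ (m : Fin n →₀ ℕ) (i j : Fin n), i < j → monomial m (1 : k) ∈ I →
            0 < m j →
            monomial (m - Finsupp.single j 1 + Finsupp.single i 1) (1 : k) ∈ I)) := by
  show IsBorelFixed I ↔ IsMonomialIdeal I ∧ IsStronglyStable I
  exact ⟨fun h => ⟨h.isTorusStable.isMonomialIdeal, h.isStronglyStable⟩,
    fun h => h.2.isBorelFixed h.1⟩

/-- (char k = 0) A homogeneous ideal `I` in `k[x₁,…,xₙ]` is Borel-fixed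
(invariant under the action of every invertible upper triangular matrix `g`,
acting as the `k`-algebra endomorphism `x_j ↦ Σ_i g_{ij} x_i`) if and only if
`I` is a monomial ideal which is strongly stable. -/
theorem borelFixed_iff_stronglyStable
    {k : Type*} [Field k] [CharZero k] {n : ℕ}
    (I : Ideal (MvPolynomial (Fin n) k))
    (hhom : ∀ p ∈ I, ∀ d : ℕ, homogeneousComponent d p ∈ I) :
    (∀ g : Matrix (Fin n) (Fin n) k, IsUnit g → (∀ i j : Fin n, j < i → g i j = 0) →
        I.map (aeval fun j : Fin n => ∑ i : Fin n, g i j • X i :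
          MvPolynomial (Fin n) k →ₐ[k] MvPolynomial (Fin n) k) = I)
      ↔ ((∃ S : Set (Fin n →₀ ℕ),
            I = Ideal.span ((fun s => monomial s (1 : k)) '' S)) ∧
          (∀ (m : Fin n →₀ ℕ) (i j : Fin n), i < j → monomial m (1 : k) ∈ I →
            0 < m j →
            monomial (m - Finsupp.single j 1 + Finsupp.single i 1) (1 : k) ∈ I)) :=
  borelFixed_iff_stronglyStable_general I
end

section
/- Let k be a field and (V, ≤) a finite partially ordered set. In the edge ring A = k[V×{1,2}]/L of the bipartite graph associated to (V, ≤), the family of elements x_{(v,1)} − x_{(v,2)}, for v ∈ V (taken in any enumeration of V), is a regular sequence in A. -/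
open MvPolynomial

/-- A sequence `a₁, …, aₙ` (given as a list) in a commutative ring `A` is regular
if each `aᵢ` is a nonzerodivisor in `A/(a₁,…,a_{i-1})` and all the quotient rings
`A/(a₁,…,aᵢ)`, `i = 0, …, n`, are nonzero. -/
def IsRegularSeq {A : Type*} [CommRing A] (l : List A) : Prop :=
  (∀ i : Fin l.length, ∀ b : A,
      Ideal.Quotient.mk (Ideal.span {a | a ∈ l.take i.val}) (l.get i * b) = 0 →
      Ideal.Quotient.mk (Ideal.span {a | a ∈ l.take i.val}) b = 0) ∧
  (∀ i : ℕ, i ≤ l.length → (Ideal.span {a | a ∈ l.take i} : Ideal A) ≠ ⊤)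

/-- The edge ideal of the bipartite graph associated to a poset `V`: in the
polynomial ring with variables indexed by `V ⊕ V` (`inl v` = `(v,1)`,
`inr w` = `(v,2)`), it is generated by the monomials `x_{(v,1)} x_{(w,2)}`
for `v ≤ w`. -/
noncomputable def posetEdgeIdeal (k V : Type*) [Field k] [PartialOrder V] :
    Ideal (MvPolynomial (V ⊕ V) k) :=
  Ideal.span {p | ∃ v w : V, v ≤ w ∧ p = X (Sum.inl v) * X (Sum.inr w)}


/-!
Substituting `x_{(v,2)} ↦ x_{(v,1)}` for `v ∈ S` is a retraction of the polynomial ring that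
kills the differences `x_{(v,1)} - x_{(v,2)}`, `v ∈ S`, and carries `L` onto a monomial ideal
`M_S`; hence `f ∈ L + (x_{(v,1)} - x_{(v,2)} : v ∈ S)` iff its substitute lies in `M_S`, and
for `u ∉ S` the substitution fixes `x_{(u,1)} - x_{(u,2)}`. Regularity modulo `M_S` is read off
exponents: if `m` is a standard exponent of `f`, then `m` stays standard after multiplying by
`x_{(u,1)}` or by `x_{(u,2)}`, since otherwise generators `x_{(u,1)} x_{(w,·)}` and
`x_{(v,1)} x_{(u,2)}` with `v ≤ u ≤ w` would give a generator `x_{(v,1)} x_{(w,·)}` dividing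
`m`. As `x_{(u,1)} x_{(u,2)} ∈ M_S`, the standard one of the two products cannot be
cancelled and survives in `(x_{(u,1)} - x_{(u,2)}) f`.
-/

theorem List.Nodup.getElem_notMem_take {α : Type*} {l : List α} (hl : l.Nodup) {i : ℕ}
    (hi : i < l.length) : l[i] ∉ l.take i := by
  rw [List.mem_take_iff_getElem]
  rintro ⟨j, hj, hji⟩
  rw [hl.getElem_inj_iff] at hji
  omega

namespace Finsupp

variable {σ : Type*} {d m : σ →₀ ℕ} {x y : σ}

theorem le_of_le_add_single (h : d ≤ m + single x 1) (hx : d x = 0) : d ≤ m := by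
  intro y
  rcases eq_or_ne y x with rfl | hyx
  · simp [hx]
  · simpa [single_apply, hyx.symm] using h y

theorem single_add_single_le (hxy : x ≠ y) (hx : single x 1 ≤ m) (hy : single y 1 ≤ m) :
    single x 1 + single y 1 ≤ m := by
  rw [single_le_iff] at hx hy
  intro z
  rcases eq_or_ne z x with rfl | hzx
  · simpa [hxy] using hx
  · rcases eq_or_ne z y with rfl | hzy
    · simpa [hzx] using hy
    · simp [hzx.symm, hzy.symm]

end Finsupp

namespace MvPolynomial

variable {σ R : Type*} [CommRing R] {G : Set (σ →₀ ℕ)} {a b : σ}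

theorem mem_span_monomial_iff_forall_mem_upperClosure {f : MvPolynomial σ R} :
    f ∈ Ideal.span ((fun s => monomial s 1) '' G) ↔
      ∀ m ∈ f.support, m ∈ upperClosure G := by
  simp only [mem_ideal_span_monomial_image, mem_upperClosure]

theorem coeff_add_single_X_sub_X_mul {m : σ →₀ ℕ} (f : MvPolynomial σ R)
    (hb : (m + Finsupp.single a 1 : σ →₀ ℕ) b = 0) :
    coeff (m + Finsupp.single a 1) ((X a - X b) * f) = coeff m f := by
  classical
  have hb' : b ∉ (m + Finsupp.single a 1).support := Finsupp.notMem_support_iff.mpr hb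
  rw [sub_mul, coeff_sub, add_comm, coeff_X_mul, coeff_X_mul', if_neg (add_comm m _ ▸ hb'),
    sub_zero]

theorem X_sub_X_mul_notMem_span_monomial (hab : a ≠ b)
    (hmul : Finsupp.single a 1 + Finsupp.single b 1 ∈ upperClosure G)
    {f : MvPolynomial σ R} {m : σ →₀ ℕ} (hm : m ∈ f.support)
    (hma : m + Finsupp.single a 1 ∉ upperClosure G) :
    (X a - X b) * f ∉ Ideal.span ((fun s => monomial s 1) '' G) := by
  have hb : (m + Finsupp.single a 1 : σ →₀ ℕ) b = 0 := by
    by_contra hb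
    exact hma ((upperClosure G).upper (Finsupp.single_add_single_le hab le_add_self
      (Finsupp.single_le_iff.mpr (Nat.one_le_iff_ne_zero.mpr hb))) hmul)
  rw [mem_span_monomial_iff_forall_mem_upperClosure]
  refine fun h => hma (h _ ?_)
  rw [mem_support_iff, coeff_add_single_X_sub_X_mul f hb]
  exact mem_support_iff.mp hm

theorem mem_span_monomial_of_X_sub_X_mul_mem (hab : a ≠ b)
    (hmul : Finsupp.single a 1 + Finsupp.single b 1 ∈ upperClosure G)
    (hstd : ∀ m ∉ upperClosure G,
      m + Finsupp.single a 1 ∉ upperClosure G ∨ m + Finsupp.single b 1 ∉ upperClosure G)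
    {f : MvPolynomial σ R} (hf : (X a - X b) * f ∈ Ideal.span ((fun s => monomial s 1) '' G)) :
    f ∈ Ideal.span ((fun s => monomial s 1) '' G) := by
  rw [mem_span_monomial_iff_forall_mem_upperClosure]
  intro m hm
  by_contra hmG
  rcases hstd m hmG with hma | hmb
  · exact X_sub_X_mul_notMem_span_monomial hab hmul hm hma hf
  · refine X_sub_X_mul_notMem_span_monomial hab.symm (add_comm (Finsupp.single a 1) _ ▸ hmul)
      hm hmb ?_
    rw [← neg_sub, neg_mul]
    exact neg_mem hf

end MvPolynomial

theorem Ideal.mem_sup_iff_apply_mem_map {R F : Type*} [Ring R] [FunLike F R R]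
    [RingHomClass F R R] {φ : F} {I J : Ideal R} (hJ : J ≤ RingHom.ker φ)
    (hsub : ∀ f, f - φ f ∈ J) {f : R} : f ∈ I ⊔ J ↔ φ f ∈ I.map φ := by
  constructor
  · intro hf
    simpa [Ideal.map_sup, (Ideal.map_eq_bot_iff_le_ker φ).mpr hJ] using Ideal.mem_map_of_mem φ hf
  · intro hf
    have hmap : I.map φ ≤ I ⊔ J := Ideal.map_le_iff_le_comap.mpr fun g hg =>
      Ideal.mem_comap.mpr <| sub_sub_cancel g (φ g) ▸
        sub_mem (Ideal.mem_sup_left hg) (Ideal.mem_sup_right (hsub g))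
    rw [← sub_add_cancel f (φ f)]
    exact add_mem (Ideal.mem_sup_right (hsub f)) (hmap hf)

section

open Sum Finsupp

variable {V : Type*}

section Merge

variable (k : Type*) [CommRing k] (S : Set V)

noncomputable def diffIdeal : Ideal (MvPolynomial (V ⊕ V) k) :=
  Ideal.span ((fun v => X (inl v) - X (inr v)) '' S)

open Classical in
noncomputable def mergeVar : V ⊕ V → V ⊕ V :=
  Sum.elim inl fun w => if w ∈ S then inl w else inr w

variable {k S} {u : V}

theorem X_sub_X_mem_diffIdeal {v : V} (hv : v ∈ S) :
    (X (inl v) - X (inr v) : MvPolynomial (V ⊕ V) k) ∈ diffIdeal k S :=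
  Ideal.subset_span ⟨v, hv, rfl⟩

theorem diffIdeal_le_ker_rename_mergeVar :
    diffIdeal k S ≤ RingHom.ker (rename (R := k) (mergeVar S)) := by
  rw [diffIdeal, Ideal.span_le]
  rintro _ ⟨v, hv, rfl⟩
  simp [mergeVar, hv]

theorem sub_rename_mergeVar_mem_diffIdeal (f : MvPolynomial (V ⊕ V) k) :
    f - rename (mergeVar S) f ∈ diffIdeal k S := by
  rw [← Ideal.Quotient.eq]
  suffices (Ideal.Quotient.mkₐ k (diffIdeal k S)).comp (rename (mergeVar S)) =
      Ideal.Quotient.mkₐ k _ from (DFunLike.congr_fun this f).symm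
  refine algHom_ext fun x => ?_
  rcases x with v | w
  · simp [mergeVar]
  · by_cases hw : w ∈ S
    · simpa [mergeVar, hw, Ideal.Quotient.eq] using X_sub_X_mem_diffIdeal hw
    · simp [mergeVar, hw]

theorem mergeVar_inr_of_notMem (hu : u ∉ S) : mergeVar S (inr u) = inr u := by
  simp [mergeVar, hu]

theorem mergeVar_inr_ne_inl (hu : u ∉ S) (w : V) : mergeVar S (inr w) ≠ inl u := by
  by_cases hw : w ∈ S
  · simpa [mergeVar, hw] using ne_of_mem_of_not_mem hw hu
  · simp [mergeVar, hw]

theorem mergeVar_inr_eq_inr_iff (hu : u ∉ S) {w : V} : mergeVar S (inr w) = inr u ↔ w = u := by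
  by_cases hw : w ∈ S
  · simpa [mergeVar, hw] using ne_of_mem_of_not_mem hw hu
  · simp [mergeVar, hw]

theorem span_take_map_mk_X_sub_X (I : Ideal (MvPolynomial (V ⊕ V) k))
    (l : List V) (i : ℕ) :
    Ideal.span {a | a ∈ (l.map fun v => Ideal.Quotient.mk I (X (inl v) - X (inr v))).take i} =
      (diffIdeal k {v | v ∈ l.take i}).map (Ideal.Quotient.mk I) := by
  rw [diffIdeal, Ideal.map_span, Set.image_image, ← List.map_take]
  congr 1
  ext
  simp only [List.mem_map, Set.mem_image, Set.mem_ofPred_eq]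

end Merge

variable [PartialOrder V]

def mergedGens (S : Set V) : Set ((V ⊕ V) →₀ ℕ) :=
  {d | ∃ v w : V, v ≤ w ∧ d = single (inl v) 1 + single (mergeVar S (inr w)) 1}

theorem posetEdgeIdeal_map_rename_mergeVar {k : Type*} [Field k] (S : Set V) :
    (posetEdgeIdeal k V).map (rename (mergeVar S)) =
      Ideal.span ((fun d => monomial d 1) '' mergedGens S) := by
  rw [posetEdgeIdeal, Ideal.map_span]
  congr 1
  ext p
  simp only [Set.mem_image, Set.mem_ofPred_eq, mergedGens]
  have hgen (v w : V) : rename (mergeVar S) (X (inl v) * X (inr w) : MvPolynomial (V ⊕ V) k) =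
      monomial (single (inl v) 1 + single (mergeVar S (inr w)) 1) 1 := by
    rw [map_mul, rename_X, rename_X, X, X, monomial_mul, one_mul]
    rfl
  constructor
  · rintro ⟨_, ⟨v, w, hvw, rfl⟩, rfl⟩
    exact ⟨_, ⟨v, w, hvw, rfl⟩, (hgen v w).symm⟩
  · rintro ⟨_, ⟨v, w, hvw, rfl⟩, rfl⟩
    exact ⟨_, ⟨v, w, hvw, rfl⟩, hgen v w⟩

section Gens

variable {S : Set V} {u : V}

theorem single_add_single_mem_mergedGens (hu : u ∉ S) :
    single (inl u) 1 + single (inr u) 1 ∈ mergedGens S :=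
  ⟨u, u, le_rfl, by rw [mergeVar_inr_of_notMem hu]⟩

theorem notMem_upperClosure_mergedGens_add (hu : u ∉ S) {m : (V ⊕ V) →₀ ℕ}
    (hm : m ∉ upperClosure (mergedGens S)) :
    m + single (inl u) 1 ∉ upperClosure (mergedGens S) ∨
      m + single (inr u) 1 ∉ upperClosure (mergedGens S) := by
  by_contra! h
  obtain ⟨⟨_, ⟨v, w, hvw, rfl⟩, hle⟩, ⟨_, ⟨v', w', hvw', rfl⟩, hle'⟩⟩ :=
    And.intro (mem_upperClosure.mp h.1) (mem_upperClosure.mp h.2)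
  have involves {g} (hg : g ∈ mergedGens S) {x} (hgx : g ≤ m + single x 1) : g x ≠ 0 :=
    fun hx => hm (mem_upperClosure.mpr ⟨g, hg, le_of_le_add_single hgx hx⟩)
  have hv : v = u := by
    by_contra hvu
    refine involves ⟨v, w, hvw, rfl⟩ hle ?_
    simp [hvu, mergeVar_inr_ne_inl hu w]
  have hw' : w' = u := by
    by_contra hwu
    refine involves ⟨v', w', hvw', rfl⟩ hle' ?_
    simp [mergeVar_inr_eq_inr_iff hu, hwu]
  subst hv hw'
  have hmw : single (mergeVar S (inr w)) 1 ≤ m := by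
    rw [add_comm m] at hle
    exact (add_le_add_iff_left _).mp hle
  have hmv' : single (inl v') 1 ≤ m := by
    rw [mergeVar_inr_of_notMem hu] at hle'
    exact (add_le_add_iff_right _).mp hle'
  have hne : inl v' ≠ mergeVar S (inr w) := by
    by_cases hw : w ∈ S
    · simp only [mergeVar, hw, elim_inr, if_true, ne_eq, inl.injEq]
      rintro rfl
      exact hu (le_antisymm hvw hvw' ▸ hw)
    · simp [mergeVar, hw]
  exact hm (mem_upperClosure.mpr
    ⟨_, ⟨v', w, hvw'.trans hvw, rfl⟩, single_add_single_le hne hmv' hmw⟩)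

end Gens

section EdgeIdeal

variable {k : Type*} [Field k] {S : Set V}

theorem mem_posetEdgeIdeal_sup_diffIdeal_of_X_sub_X_mul_mem (hu : u ∉ S)
    {f : MvPolynomial (V ⊕ V) k}
    (hf : (X (inl u) - X (inr u)) * f ∈ posetEdgeIdeal k V ⊔ diffIdeal k S) :
    f ∈ posetEdgeIdeal k V ⊔ diffIdeal k S := by
  have hmerge (g : MvPolynomial (V ⊕ V) k) :=
    Ideal.mem_sup_iff_apply_mem_map (I := posetEdgeIdeal k V) (f := g)
      (diffIdeal_le_ker_rename_mergeVar (S := S)) sub_rename_mergeVar_mem_diffIdeal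
  rw [hmerge, posetEdgeIdeal_map_rename_mergeVar] at hf ⊢
  rw [map_mul, map_sub, rename_X, rename_X, mergeVar_inr_of_notMem hu] at hf
  exact mem_span_monomial_of_X_sub_X_mul_mem inl_ne_inr
    (subset_upperClosure (single_add_single_mem_mergedGens hu))
    (fun _ => notMem_upperClosure_mergedGens_add hu) hf

theorem posetEdgeIdeal_sup_diffIdeal_ne_top : posetEdgeIdeal k V ⊔ diffIdeal k S ≠ ⊤ := by
  refine ne_top_of_le_ne_top (RingHom.ker_ne_top (constantCoeff (σ := V ⊕ V) (R := k)))
    (sup_le ?_ ?_)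
  · rw [posetEdgeIdeal, Ideal.span_le]
    rintro _ ⟨v, w, -, rfl⟩
    simp
  · rw [diffIdeal, Ideal.span_le]
    rintro _ ⟨v, -, rfl⟩
    simp

end EdgeIdeal

end

theorem poset_edge_ring_regular_sequence_general
    {k V : Type*} [Field k] [PartialOrder V]
    (l : List V) (hnodup : l.Nodup) :
    IsRegularSeq (l.map fun v =>
      Ideal.Quotient.mk (posetEdgeIdeal k V) (X (Sum.inl v) - X (Sum.inr v))) := by
  refine ⟨fun i b hb => ?_, fun i _ => ?_⟩
  · obtain ⟨f, rfl⟩ := Ideal.Quotient.mk_surjective b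
    rw [Ideal.Quotient.eq_zero_iff_mem, span_take_map_mk_X_sub_X, List.get_eq_getElem,
      List.getElem_map, ← map_mul, Ideal.mem_quotient_iff_mem_sup, sup_comm] at hb
    rw [Ideal.Quotient.eq_zero_iff_mem, span_take_map_mk_X_sub_X, Ideal.mem_quotient_iff_mem_sup,
      sup_comm]
    refine mem_posetEdgeIdeal_sup_diffIdeal_of_X_sub_X_mul_mem ?_ hb
    exact hnodup.getElem_notMem_take _
  · rw [span_take_map_mk_X_sub_X, Ne, Ideal.eq_top_iff_one, ← map_one (Ideal.Quotient.mk _),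
      Ideal.mem_quotient_iff_mem_sup, sup_comm, ← Ideal.eq_top_iff_one]
    exact posetEdgeIdeal_sup_diffIdeal_ne_top

/-- In the edge ring `k[V×{1,2}]/L` of the bipartite graph of a finite poset
`(V, ≤)`, the elements `x_{(v,1)} − x_{(v,2)}`, `v ∈ V`, taken in any
enumeration of `V`, form a regular sequence. -/
theorem poset_edge_ring_regular_sequence
    {k V : Type*} [Field k] [Fintype V] [PartialOrder V]
    (l : List V) (hnodup : l.Nodup) (hall : ∀ v : V, v ∈ l) :
    IsRegularSeq (l.map fun v =>
      Ideal.Quotient.mk (posetEdgeIdeal k V) (X (Sum.inl v) - X (Sum.inr v))) :=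
  poset_edge_ring_regular_sequence_general l hnodup
end
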